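/- Let (G, X, M, ℓ) be an instance of the annotated odd cycle transversal problem and let H ⊆ V(G) \ X be a set of vertices such that (1) H intersects all important X-paths of G, (2) (G − X) − H has at most α connected components, and (3) each connected component of (G − X) − H has at most δ neighbors in H. Then there exists a set Z ⊆ V(G) with X ∪ H ⊆ Z and |Z| ≤ |X| + |H| + α·δ·κ(δ, δ−1, |X|+δ) such that (G, X, M, ℓ) has a solution (a set S ⊆ V(G) of size at most ℓ with G − S bipartite and admitting a proper 2-coloring respecting M) if and only if it has such a solution S with S ⊆ Z. Here κ(n, m, r) denotes the maximum, over all labeled graphs (G, L, f) with |L| ≤ r and over all sets of n terminals, of the number of distinct cut characteristics induced by separators of size at most m. -/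

import Mathlib

set_option maxHeartbeats 1000000

variable {V : Type}

/-- The graph obtained from `G` by deleting the vertex set `S`
(deleted vertices are kept as isolated vertices). -/
def gdelete (G : SimpleGraph V) (S : Set V) : SimpleGraph V where
  Adj u v := G.Adj u v ∧ u ∉ S ∧ v ∉ S
  symm := by constructor; intro u v h; exact ⟨h.1.symm, h.2.2, h.2.1⟩
  loopless := by constructor; intro v h; exact G.irrefl h.1

/-- The subgraph of `G` induced by the vertex set `A`
(vertices outside `A` are kept as isolated vertices). -/
def grestrict (G : SimpleGraph V) (A : Set V) : SimpleGraph V := gdelete G Aᶜ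

/-- The open neighborhood `N_G(C)` of a vertex set `C`. -/
def gnbhd (G : SimpleGraph V) (C : Set V) : Set V := {v | v ∉ C ∧ ∃ u ∈ C, G.Adj u v}

/-- `C` is (the vertex set of) a connected component of the induced subgraph `G[A]`:
`C ⊆ A`, `C` is nonempty and connected, and `C` is closed under adjacency within `A`. -/
def IsCompOf (G : SimpleGraph V) (A C : Set V) : Prop :=
  C ⊆ A ∧ C.Nonempty ∧ (∀ u ∈ C, ∀ v ∈ C, (grestrict G C).Reachable u v) ∧
    ∀ u ∈ C, ∀ v ∈ A, G.Adj u v → v ∈ C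

/-- The set of internal vertices of a walk `W : G.Walk p q`
(all support vertices except the endpoints `p` and `q`). -/
def walkInterior {G : SimpleGraph V} {p q : V} (W : G.Walk p q) : Set V :=
  {v | v ∈ W.support ∧ v ≠ p ∧ v ≠ q}

/-- `W` encodes an `X`-path between `p, q ∈ X`: a simple path `v_1, …, v_r` in `G − X`
together with the two distinct edges `{p, v_1}` and `{v_r, q}` of `G`.  It is encoded as a
walk from `p` to `q` of length at least `2` whose internal vertices avoid `X`, which is a
simple path if `p ≠ q` and a cycle if `p = q` (the latter makes the two attachment edges
distinct). -/
def IsXPath (G : SimpleGraph V) (X : Set V) {p q : V} (W : G.Walk p q) : Prop :=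
  p ∈ X ∧ q ∈ X ∧ 2 ≤ W.length ∧ (∀ v ∈ walkInterior W, v ∉ X) ∧
    ((p ≠ q ∧ W.IsPath) ∨ (∃ h : p = q, (W.copy rfl h.symm).IsCycle))

/-- The length of the `X`-path encoded by `W`, i.e. its number of internal vertices. -/
def xpLen {G : SimpleGraph V} {p q : V} (W : G.Walk p q) : ℕ := W.length - 1

/-- An important `p`–`q` `X`-path (w.r.t. the monochromatic pairs `M`): (a) its length is
odd, `p ≠ q` and `{p,q} ∉ M`, or (b) its length is even and `{p,q} ∉ E(G)`. -/
def IsImpXPath (G : SimpleGraph V) (X : Set V) (M : Set (Sym2 V)) {p q : V}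
    (W : G.Walk p q) : Prop :=
  IsXPath G X W ∧
    ((Odd (xpLen W) ∧ p ≠ q ∧ s(p, q) ∉ M) ∨ (Even (xpLen W) ∧ ¬ G.Adj p q))

/-- `M` consists of unordered pairs of distinct vertices of `X`. -/
def PairsOver (M : Set (Sym2 V)) (X : Set V) : Prop :=
  ∀ e ∈ M, ∃ u v : V, u ∈ X ∧ v ∈ X ∧ u ≠ v ∧ e = s(u, v)

/-- `G − S` is bipartite via a proper 2-coloring that moreover assigns equal colors
to every (surviving) monochromatic pair in `M`. -/
def AnnColoring (G : SimpleGraph V) (M : Set (Sym2 V)) (S : Set V) : Prop :=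
  ∃ c : V → Bool, (∀ u v : V, u ∉ S → v ∉ S → G.Adj u v → c u ≠ c v) ∧
    ∀ u v : V, u ∉ S → v ∉ S → s(u, v) ∈ M → c u = c v

/-- `R_G(X, S)`: the set of vertices reachable from `X \ S` in `G − S`. -/
def greach (G : SimpleGraph V) (X S : Set V) : Set V :=
  {v | v ∉ S ∧ ∃ x ∈ X \ S, (gdelete G S).Reachable x v}

/-- `L(t, S)`: the set of labels reachable from the terminal `t` in `G − S`,
for a labeling `f` of the vertices of `G` by sets of labels. -/
def reachLabels {L : Type} (G : SimpleGraph V) (f : V → Set L) (S : Set V) (t : V) :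
    Set L :=
  ⋃ v ∈ greach G {t} S, f v

/-- The set of distinct cut characteristics `K(S, T) = (L(t_1,S), …, L(t_n,S))`
induced by separators `S` of size at most `m`, w.r.t. the terminal sequence `T`. -/
def cutChars {L : Type} (G : SimpleGraph V) (f : V → Set L) {n : ℕ} (T : Fin n → V)
    (m : ℕ) : Set (Fin n → Set L) :=
  {k | ∃ S : Set V, S.ncard ≤ m ∧ k = fun i => reachLabels G f S (T i)}

/-- `κ(n, m, r)`: the maximum number of distinct cut characteristics induced by
separators of at most `m` vertices, over all (finite) labeled graphs with at most `r`
labels and all sequences of `n` distinct terminals. -/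
noncomputable def kappa (n m r : ℕ) : ℕ :=
  sSup {k : ℕ | ∃ (N : ℕ) (G : SimpleGraph (Fin N)) (f : Fin N → Set (Fin r))
    (T : Fin n → Fin N), Function.Injective T ∧ k = (cutChars G f T m).ncard}

/-!
Fix a proper 2-colouring `b` of `G − X`. Let `C` be a component of `G − X − H` and
`B = N(C) ∩ H` its boundary. Since `H` meets every important `X`-path, all vertices of `X`
adjacent to `C` that survive a solution `S` ask for the same flip of `b` on `C`. Hence, inside
`C ∪ B`, a solution matters only through the connections it leaves from each boundary vertex to
`B` and to the neighbours of `X` in `C`, i.e. through the cut characteristic of `S ∩ (C ∪ B)` in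
`G[C ∪ B]` with terminals `B` and labels `X ∪ B`. So `S ∩ (C ∪ B)` can be replaced by a smallest
set `R` with the same characteristic when it has fewer than `δ` vertices, and by `B` otherwise,
after recolouring `C \ R` component by component. Doing this for each of the at most `α`
components moves a solution into `Z = X ∪ H ∪ ⋃_C W_C`, where `W_C` is the union of the smallest
representatives of the at most `κ(δ, δ − 1, |X| + δ)` characteristics.
-/

open SimpleGraph

section Restriction

variable {G : SimpleGraph V} {A S : Set V} {u v : V}

lemma grestrict_adj : (grestrict G A).Adj u v ↔ G.Adj u v ∧ u ∈ A ∧ v ∈ A := by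
  simp [grestrict, gdelete]

lemma grestrict_le_gdelete (h : A ⊆ Sᶜ) : grestrict G A ≤ gdelete G S := fun _ _ huv =>
  have ⟨hG, hu, hv⟩ := grestrict_adj.mp huv
  ⟨hG, h hu, h hv⟩

lemma grestrict_le : grestrict G A ≤ G := fun _ _ huv => (grestrict_adj.mp huv).1

lemma gdelete_grestrict : gdelete (grestrict G A) S = grestrict G (A \ S) := by
  ext u v
  simp only [gdelete, grestrict_adj, Set.mem_sdiff]
  tauto

lemma SimpleGraph.Walk.support_subset_of_grestrict (W : (grestrict G A).Walk u v) (hu : u ∈ A) :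
    ∀ z ∈ W.support, z ∈ A := by
  induction W with
  | nil => simpa using hu
  | cons huv _ ih =>
    simpa [hu] using ih (grestrict_adj.mp huv).2.2

end Restriction

lemma SimpleGraph.Coloring.xor_eq_of_reachable {K G₁ G₂ : SimpleGraph V} (h₁ : K ≤ G₁) (h₂ : K ≤ G₂)
    (b : G₁.Coloring Bool) (c : G₂.Coloring Bool) {u v : V} (h : K.Reachable u v) :
    xor (c u) (b u) = xor (c v) (b v) := by
  obtain ⟨W⟩ := h
  have hb := b.even_length_iff_congr (W.mapLe h₁)
  have hc := c.even_length_iff_congr (W.mapLe h₂)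
  rw [Walk.length_mapLe] at hb hc
  have h := hb.symm.trans hc
  revert h
  cases b u <;> cases b v <;> cases c u <;> cases c v <;> decide

section XPath

variable {G : SimpleGraph V} {X : Set V} {x x' v v' : V}

lemma walkInterior_cons_concat_subset (hxv : G.Adj x v) (hx'v' : G.Adj x' v')
    (P : G.Walk v v') :
    walkInterior (Walk.cons hxv (P.concat hx'v'.symm)) ⊆ {z | z ∈ P.support} := by
  rintro z ⟨hz, hzx, hzx'⟩
  simp_all [Walk.support_concat]

lemma xpLen_cons_concat (hxv : G.Adj x v) (hx'v' : G.Adj x' v') (P : G.Walk v v') :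
    xpLen (Walk.cons hxv (P.concat hx'v'.symm)) = P.length + 1 := by
  simp [xpLen, Walk.length_concat]

lemma isXPath_cons_concat (hx : x ∈ X) (hx' : x' ∈ X) (hxv : G.Adj x v) (hx'v' : G.Adj x' v')
    {P : G.Walk v v'} (hP : P.IsPath) (hPX : ∀ z ∈ P.support, z ∉ X) (hne : x ≠ x' ∨ v ≠ v') :
    IsXPath G X (Walk.cons hxv (P.concat hx'v'.symm)) := by
  have hxP : x ∉ P.support := fun h => hPX x h hx
  have hx'P : x' ∉ P.support := fun h => hPX x' h hx'
  refine ⟨hx, hx', by simp [Walk.length_concat],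
    fun z hz => hPX z (walkInterior_cons_concat_subset hxv hx'v' P hz), ?_⟩
  by_cases hxx : x = x'
  · subst hxx
    refine .inr ⟨rfl, ?_⟩
    rw [Walk.copy_rfl_rfl, Walk.cons_isCycle_iff, Walk.edges_concat, List.concat_eq_append]
    refine ⟨hP.concat hx'P _, fun h => ?_⟩
    rcases List.mem_append.mp h with h | h
    · exact hxP (P.fst_mem_support_of_mem_edges h)
    · have hvv' : v ≠ v' := hne.resolve_left (not_ne_iff.mpr rfl)
      simp only [List.mem_singleton, Sym2.eq_iff] at h
      rcases h with ⟨rfl, -⟩ | ⟨-, rfl⟩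
      · exact hxP P.end_mem_support
      · exact hvv' rfl
  · refine .inl ⟨hxx, (Walk.cons_isPath_iff _ _).mpr ⟨hP.concat hx'P _, ?_⟩⟩
    simp [Walk.support_concat, hxP, hxx]

lemma xor_eq_of_reachable_grestrict {M : Set (Sym2 V)} {H S C : Set V}
    (hHit : ∀ (p q : V) (W : G.Walk p q), IsImpXPath G X M W → (H ∩ walkInterior W).Nonempty)
    (b : (gdelete G X).Coloring Bool) (c : (gdelete G S).Coloring Bool)
    (hcM : ∀ u w, u ∉ S → w ∉ S → s(u, w) ∈ M → c u = c w) (hC : C ⊆ Xᶜ ∩ Hᶜ)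
    (hx : x ∈ X) (hx' : x' ∈ X) (hxS : x ∉ S) (hx'S : x' ∉ S) (hv : v ∈ C)
    (hvv' : (grestrict G C).Reachable v v') (hxv : G.Adj x v) (hx'v' : G.Adj x' v') :
    xor (c x) (b v) = xor (c x') (b v') := by
  classical
  obtain ⟨P₀⟩ := hvv'
  set P := P₀.bypass
  have hPC : ∀ z ∈ P.support, z ∈ C := P.support_subset_of_grestrict hv
  set Q := P.mapLe (grestrict_le (G := G))
  have hparity : Even Q.length ↔ (b v ↔ b v') := by
    rw [← b.even_length_iff_congr (P.mapLe (grestrict_le_gdelete fun z hz => (hC hz).1))]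
    simp [Q]
  -- `x, v, …, v', x'` is an `X`-path avoiding `H`, so it is not important
  have hnot (hne : x ≠ x' ∨ v ≠ v') :
      ¬ ((Odd (Q.length + 1) ∧ x ≠ x' ∧ s(x, x') ∉ M) ∨ (Even (Q.length + 1) ∧ ¬ G.Adj x x')) := by
    intro himp
    have hQX : ∀ z ∈ Q.support, z ∉ X := fun z hz =>
      (hC (hPC z (by simpa [Q, Walk.support_mapLe_eq_support] using hz))).1
    obtain ⟨z, hzH, hz⟩ := hHit x x' (Walk.cons hxv (Q.concat hx'v'.symm))
      ⟨isXPath_cons_concat hx hx' hxv hx'v' ((P₀.bypass_isPath).mapLe _) hQX hne,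
        by rwa [xpLen_cons_concat hxv hx'v' Q]⟩
    have hzQ := walkInterior_cons_concat_subset hxv hx'v' Q hz
    exact (hC (hPC z (by simpa [Q, Walk.support_mapLe_eq_support] using hzQ))).2 hzH
  by_cases hbv : b v = b v'
  · by_cases hxx : x = x'
    · rw [hxx, hbv]
    have hM : s(x, x') ∈ M := by
      by_contra hM
      exact hnot (.inl hxx) (.inl ⟨(hparity.mpr (by rw [hbv])).add_one, hxx, hM⟩)
    rw [hcM x x' hxS hx'S hM, hbv]
  · have hadj : G.Adj x x' := by
      by_contra hadj
      refine hnot (.inr fun h => hbv (h ▸ rfl)) (.inr ⟨?_, hadj⟩)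
      exact (Nat.not_even_iff_odd.mp fun h => hbv (Bool.coe_iff_coe.mp (hparity.mp h))).add_one
    have hcx : c x ≠ c x' := c.valid ⟨hadj, hxS, hx'S⟩
    revert hbv hcx
    cases c x <;> cases c x' <;> cases b v <;> cases b v' <;> simp

end XPath

lemma PairsOver.mem {M : Set (Sym2 V)} {X : Set V} (hM : PairsOver M X) {u v : V}
    (h : s(u, v) ∈ M) : u ∈ X ∧ v ∈ X := by
  obtain ⟨a, b, ha, hb, -, he⟩ := hM _ h
  rcases Sym2.eq_iff.mp he with ⟨rfl, rfl⟩ | ⟨rfl, rfl⟩ <;> tauto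

lemma annColoring_of_eqOn_compl {G : SimpleGraph V} {M : Set (Sym2 V)} {X S S' Q : Set V}
    (hM : PairsOver M X) (hQX : Q ⊆ Xᶜ) (c : (gdelete G S).Coloring Bool)
    (hcM : ∀ u w, u ∉ S → w ∉ S → s(u, w) ∈ M → c u = c w)
    (hS : ∀ z, z ∉ S' → z ∉ Q → z ∉ S) {c' : V → Bool} (hcc' : ∀ v ∉ Q, c' v = c v)
    (hQ : ∀ u ∈ Q, ∀ v ∉ S', G.Adj u v → c' u ≠ c' v) : AnnColoring G M S' := by
  refine ⟨c', fun u v hu hv huv => ?_, fun u v hu hv huv => ?_⟩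
  · by_cases huQ : u ∈ Q
    · exact hQ u huQ v hv huv
    by_cases hvQ : v ∈ Q
    · exact (hQ v hvQ u hu huv.symm).symm
    rw [hcc' u huQ, hcc' v hvQ]
    exact c.valid ⟨huv, hS u hu huQ, hS v hv hvQ⟩
  · have huQ : u ∉ Q := fun h => hQX h (hM.mem huv).1
    have hvQ : v ∉ Q := fun h => hQX h (hM.mem huv).2
    rw [hcc' u huQ, hcc' v hvQ]
    exact hcM u v (hS u hu huQ) (hS v hv hvQ) huv

section Recolouring

variable {G : SimpleGraph V} {X H C B R S : Set V}

/-- What the recolouring argument needs from a replacement `R` of `S` inside `C ∪ B`; it holds when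
`R` and `S ∩ (C ∪ B)` have the same cut characteristic (`ReachPreserved.of_reachLabels_eq`). -/
structure ReachPreserved (G : SimpleGraph V) (X C B R S : Set V) : Prop where
  not_mem : ∀ h ∈ B, h ∉ R → h ∉ S
  exists_adj : ∀ h ∈ B, h ∉ R → ∀ x ∈ X, ∀ v ∈ C, v ∉ R → G.Adj x v →
    (grestrict G ((C ∪ B) \ R)).Reachable h v →
    ∃ v' ∈ C, v' ∉ S ∧ G.Adj x v' ∧ (grestrict G ((C ∪ B) \ S)).Reachable h v'
  reachable : ∀ h ∈ B, h ∉ R → ∀ h' ∈ B, h' ∉ R →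
    (grestrict G ((C ∪ B) \ R)).Reachable h h' → (grestrict G ((C ∪ B) \ S)).Reachable h h'

variable (b : (gdelete G X).Coloring Bool) (c : (gdelete G S).Coloring Bool)

lemma xor_eq_not_xor_of_adj {h w : V} (hh : h ∉ X) (hw : w ∉ X) (hhw : G.Adj h w) :
    xor (c h) (b w) = !xor (c h) (b h) := by
  have := b.valid ⟨hhw, hh, hw⟩
  revert this
  cases b h <;> cases b w <;> simp

lemma ReachPreserved.xor_eq_of_reachable (hR : ReachPreserved G X C B R S) (hCB : C ∪ B ⊆ Xᶜ)
    {h h' : V} (hh : h ∈ B \ R) (hh' : h' ∈ B \ R)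
    (hr : (grestrict G ((C ∪ B) \ R)).Reachable h h') :
    xor (c h) (b h) = xor (c h') (b h') :=
  Coloring.xor_eq_of_reachable (grestrict_le_gdelete fun _ hz => hCB hz.1)
    (grestrict_le_gdelete fun _ hz => hz.2) b c (hR.reachable h hh.1 hh.2 h' hh'.1 hh'.2 hr)

lemma ReachPreserved.xor_eq_of_adj_mem {M : Set (Sym2 V)} (hR : ReachPreserved G X C B R S)
    (hHit : ∀ (p q : V) (W : G.Walk p q), IsImpXPath G X M W → (H ∩ walkInterior W).Nonempty)
    (hcM : ∀ u w, u ∉ S → w ∉ S → s(u, w) ∈ M → c u = c w) (hC : IsCompOf G (Xᶜ ∩ Hᶜ) C)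
    (hCB : C ∪ B ⊆ Xᶜ) {x w h : V} (hx : x ∈ X \ S) (hw : w ∈ C \ R) (hxw : G.Adj x w)
    (hh : h ∈ B \ R) (hr : (grestrict G ((C ∪ B) \ R)).Reachable h w) :
    xor (c x) (b w) = !xor (c h) (b h) := by
  obtain ⟨v', hv'C, hv'S, hxv', hr'⟩ := hR.exists_adj h hh.1 hh.2 x hx.1 w hw.1 hw.2 hxw hr
  have hcx : c x ≠ c v' := c.valid ⟨hxv', hx.2, hv'S⟩
  calc xor (c x) (b w) = xor (c x) (b v') :=
        xor_eq_of_reachable_grestrict hHit b c hcM hC.1 hx.1 hx.1 hx.2 hx.2 hw.1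
          (hC.2.2.1 w hw.1 v' hv'C) hxw hxv'
    _ = !xor (c v') (b v') := by revert hcx; cases c x <;> cases c v' <;> simp
    _ = !xor (c h) (b h) := by
      rw [Coloring.xor_eq_of_reachable (grestrict_le_gdelete fun _ hz => hCB hz.1)
        (grestrict_le_gdelete fun _ hz => hz.2) b c hr']

lemma ReachPreserved.xor_eq_of_reachable_boundary {M : Set (Sym2 V)}
    (hR : ReachPreserved G X C B R S)
    (hHit : ∀ (p q : V) (W : G.Walk p q), IsImpXPath G X M W → (H ∩ walkInterior W).Nonempty)
    (hcM : ∀ u w, u ∉ S → w ∉ S → s(u, w) ∈ M → c u = c w) (hC : IsCompOf G (Xᶜ ∩ Hᶜ) C)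
    (hCB : C ∪ B ⊆ Xᶜ) {y w h : V} (hy : y ∈ X \ S ∪ B \ R) (hw : w ∈ C \ R) (hyw : G.Adj y w)
    (hh : h ∈ B \ R) (hr : (grestrict G ((C ∪ B) \ R)).Reachable h w) :
    xor (c y) (b w) = !xor (c h) (b h) := by
  rcases hy with hy | hy
  · exact hR.xor_eq_of_adj_mem b c hHit hcM hC hCB hy hw hyw hh hr
  · have hyw' : (grestrict G ((C ∪ B) \ R)).Adj y w :=
      grestrict_adj.mpr ⟨hyw, ⟨.inr hy.1, hy.2⟩, ⟨.inl hw.1, hw.2⟩⟩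
    rw [xor_eq_not_xor_of_adj b c (hCB (.inr hy.1)) (hCB (.inl hw.1)) hyw,
      hR.xor_eq_of_reachable b c hCB hy hh (hyw'.reachable.trans hr.symm)]

lemma ReachPreserved.xor_eq_of_demands {M : Set (Sym2 V)} (hR : ReachPreserved G X C B R S)
    (hHit : ∀ (p q : V) (W : G.Walk p q), IsImpXPath G X M W → (H ∩ walkInterior W).Nonempty)
    (hcM : ∀ u w, u ∉ S → w ∉ S → s(u, w) ∈ M → c u = c w) (hC : IsCompOf G (Xᶜ ∩ Hᶜ) C)
    (hCB : C ∪ B ⊆ Xᶜ) {y w y' w' : V} (hy : y ∈ X \ S ∪ B \ R) (hw : w ∈ C \ R)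
    (hyw : G.Adj y w) (hy' : y' ∈ X \ S ∪ B \ R) (hw' : w' ∈ C \ R) (hy'w' : G.Adj y' w')
    (hr : (grestrict G ((C ∪ B) \ R)).Reachable w w') :
    xor (c y) (b w) = xor (c y') (b w') := by
  have hadj {z u : V} (hz : z ∈ B \ R) (hu : u ∈ C \ R) (hzu : G.Adj z u) :
      (grestrict G ((C ∪ B) \ R)).Reachable z u :=
    Adj.reachable (grestrict_adj.mpr ⟨hzu, ⟨.inr hz.1, hz.2⟩, ⟨.inl hu.1, hu.2⟩⟩)
  rcases hy' with hy'X | hy'B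
  · rcases hy with hyX | hyB
    · exact xor_eq_of_reachable_grestrict hHit b c hcM hC.1 hyX.1 hy'X.1 hyX.2 hy'X.2 hw.1
        (hC.2.2.1 w hw.1 w' hw'.1) hyw hy'w'
    · rw [hR.xor_eq_of_reachable_boundary b c hHit hcM hC hCB (.inr hyB) hw hyw hyB
        (hadj hyB hw hyw), hR.xor_eq_of_reachable_boundary b c hHit hcM hC hCB (.inl hy'X) hw'
        hy'w' hyB ((hadj hyB hw hyw).trans hr)]
  · rw [hR.xor_eq_of_reachable_boundary b c hHit hcM hC hCB hy hw hyw hy'B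
      ((hadj hy'B hw' hy'w').trans hr.symm), hR.xor_eq_of_reachable_boundary b c hHit hcM hC hCB
      (.inr hy'B) hw' hy'w' hy'B (hadj hy'B hw' hy'w')]

end Recolouring

lemma IsCompOf.mem_sdiff_of_adj {G : SimpleGraph V} {X H C R S : Set V}
    (hC : IsCompOf G (Xᶜ ∩ Hᶜ) C) (hH : H ⊆ Xᶜ) {u v : V} (hu : u ∈ C) (hvC : v ∉ C)
    (hv : v ∉ S \ (C ∪ gnbhd G C ∩ H) ∪ R) (huv : G.Adj u v) :
    v ∈ X \ S ∪ (gnbhd G C ∩ H) \ R := by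
  by_cases hvX : v ∈ X
  · refine .inl ⟨hvX, fun hvS => hv (.inl ⟨hvS, ?_⟩)⟩
    rintro (h | h)
    exacts [(hC.1 h).1 hvX, hH h.2 hvX]
  by_cases hvH : v ∈ H
  · exact .inr ⟨⟨⟨hvC, u, hu, huv⟩, hvH⟩, fun h => hv (.inr h)⟩
  · exact absurd (hC.2.2.2 u hu v ⟨hvX, hvH⟩ huv) hvC

/-- On each component of `G[(C ∪ B) \ R]` the new colouring is `b` up to a flip `χ`; a surviving
neighbour `y` of `w ∈ C \ R` asks for the flip `xor (c y) (b w)`, and these requests agree by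
`ReachPreserved.xor_eq_of_demands`. -/
theorem ReachPreserved.annColoring {G : SimpleGraph V} {M : Set (Sym2 V)} {X H C R S : Set V}
    (hR : ReachPreserved G X C (gnbhd G C ∩ H) R S) (hM : PairsOver M X) (hH : H ⊆ Xᶜ)
    (hHit : ∀ (p q : V) (W : G.Walk p q), IsImpXPath G X M W → (H ∩ walkInterior W).Nonempty)
    (b : (gdelete G X).Coloring Bool) (hC : IsCompOf G (Xᶜ ∩ Hᶜ) C) (hS : AnnColoring G M S) :
    AnnColoring G M (S \ (C ∪ gnbhd G C ∩ H) ∪ R) := by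
  classical
  obtain ⟨c₀, hc₀, hcM⟩ := hS
  let c : (gdelete G S).Coloring Bool := Coloring.mk c₀ fun h => hc₀ _ _ h.2.1 h.2.2 h.1
  set B := gnbhd G C ∩ H
  set K := grestrict G ((C ∪ B) \ R)
  have hCX : C ⊆ Xᶜ := fun z hz => (hC.1 hz).1
  have hCB : C ∪ B ⊆ Xᶜ := Set.union_subset hCX fun z hz => hH hz.2
  let D := {p : V × V // p.1 ∈ X \ S ∪ B \ R ∧ p.2 ∈ C \ R ∧ G.Adj p.1 p.2}
  have hfac : Function.FactorsThrough (fun p : D => xor (c p.1.1) (b p.1.2))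
      (fun p : D => K.connectedComponentMk p.1.2) := fun p q hpq =>
    hR.xor_eq_of_demands b c hHit hcM hC hCB p.2.1 p.2.2.1 p.2.2.2 q.2.1 q.2.2.1 q.2.2.2
      (ConnectedComponent.exact hpq)
  set χ := Function.extend (fun p : D => K.connectedComponentMk p.1.2)
    (fun p : D => xor (c p.1.1) (b p.1.2)) (fun _ => false)
  let c' : V → Bool := fun v => if v ∈ C \ R then !xor (χ (K.connectedComponentMk v)) (b v) else c v
  refine annColoring_of_eqOn_compl hM (fun z hz => hCX hz.1) c hcM ?_ (fun v hv => if_neg hv)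
    (c' := c') ?_
  · intro z hz hzQ hzS
    by_cases hzC : z ∈ C
    · exact hz (.inr (by_contra fun hzR => hzQ ⟨hzC, hzR⟩))
    by_cases hzB : z ∈ B
    · exact hR.not_mem z hzB (fun hzR => hz (.inr hzR)) hzS
    · exact hz (.inl ⟨hzS, fun h => h.elim hzC hzB⟩)
  · intro u hu v hv huv
    by_cases hvC : v ∈ C
    · have hvQ : v ∈ C \ R := ⟨hvC, fun h => hv (.inr h)⟩
      have hcomp : K.connectedComponentMk u = K.connectedComponentMk v :=
        ConnectedComponent.eq.mpr
          (Adj.reachable (grestrict_adj.mpr ⟨huv, ⟨.inl hu.1, hu.2⟩, ⟨.inl hvC, hvQ.2⟩⟩))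
      have hbuv := b.valid ⟨huv, hCX hu.1, hCX hvC⟩
      simp only [c', if_pos hu, if_pos hvQ, hcomp]
      intro h
      exact hbuv (by simpa using h)
    · have hχ : χ (K.connectedComponentMk u) = xor (c v) (b u) :=
        hfac.extend_apply _ ⟨(v, u), hC.mem_sdiff_of_adj hH hu.1 hvC hv huv, hu, huv.symm⟩
      simp only [c', if_pos hu, if_neg (fun h : v ∈ C \ R => hvC h.1)]
      rw [hχ]
      simp

section CutCharacteristics

variable {α β L : Type}

lemma mem_greach_singleton {K : SimpleGraph α} {S : Set α} {t v : α} :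
    v ∈ greach K {t} S ↔ v ∉ S ∧ t ∉ S ∧ (gdelete K S).Reachable t v := by
  simp [greach]

lemma reachable_map_iff (φ : α ↪ β) (K : SimpleGraph α) {a : α} {y : β} :
    (K.map φ).Reachable (φ a) y ↔ ∃ b, φ b = y ∧ K.Reachable a b := by
  constructor
  · intro h
    rw [reachable_iff_reflTransGen] at h
    induction h with
    | refl => exact ⟨a, rfl, .rfl⟩
    | tail _ hyz ih =>
      obtain ⟨b, rfl, hab⟩ := ih
      obtain ⟨b', c, hbc, hb', rfl⟩ := (map_adj φ K _ _).mp hyz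
      exact ⟨c, rfl, hab.trans (φ.injective hb' ▸ hbc.reachable)⟩
  · rintro ⟨b, rfl, hab⟩
    exact hab.map (Embedding.map φ K).toHom

lemma gdelete_map (φ : α ↪ β) (K : SimpleGraph α) (S : Set α) :
    gdelete (K.map φ) (φ '' S) = (gdelete K S).map φ := by
  ext u v
  simp only [gdelete, map_adj]
  constructor
  · rintro ⟨⟨a, b, hab, rfl, rfl⟩, ha, hb⟩
    exact ⟨a, b, ⟨hab, fun h => ha ⟨a, h, rfl⟩, fun h => hb ⟨b, h, rfl⟩⟩, rfl, rfl⟩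
  · rintro ⟨a, b, ⟨hab, ha, hb⟩, rfl, rfl⟩
    exact ⟨⟨a, b, hab, rfl, rfl⟩, by simpa using ha, by simpa using hb⟩

lemma reachLabels_map (φ : α ↪ β) (K : SimpleGraph α) (f : β → Set L) (S : Set α) (t : α) :
    reachLabels (K.map φ) f (φ '' S) (φ t) = reachLabels K (f ∘ φ) S t := by
  ext l
  simp only [reachLabels, Set.mem_iUnion, mem_greach_singleton, gdelete_map, reachable_map_iff,
    φ.injective.mem_set_image, exists_prop, Function.comp_apply]
  constructor
  · rintro ⟨_, ⟨hv, ht, b, rfl, hr⟩, hl⟩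
    exact ⟨b, ⟨by simpa using hv, ht, hr⟩, hl⟩
  · rintro ⟨b, ⟨hb, ht, hr⟩, hl⟩
    exact ⟨φ b, ⟨by simpa using hb, ht, b, rfl, hr⟩, hl⟩

lemma reachLabels_image (K : SimpleGraph α) (f : α → Set L) (j : L → β) (S : Set α) (t : α) :
    reachLabels K (fun v => j '' f v) S t = j '' reachLabels K f S t := by
  simp only [reachLabels, Set.image_iUnion₂]

lemma bddAbove_cutChars_ncard (n m r : ℕ) :
    BddAbove {k : ℕ | ∃ (N : ℕ) (G : SimpleGraph (Fin N)) (f : Fin N → Set (Fin r))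
      (T : Fin n → Fin N), Function.Injective T ∧ k = (cutChars G f T m).ncard} :=
  ⟨Nat.card (Fin n → Set (Fin r)), by rintro _ ⟨N, G, f, T, -, rfl⟩; exact Set.ncard_le_card _⟩

theorem ncard_cutChars_le_kappa [Fintype α] [Finite L] (K : SimpleGraph α) (f : α → Set L)
    {k n : ℕ} (T : Fin k → α) (hT : Function.Injective T) (hkn : k ≤ n) {r : ℕ}
    (hL : Nat.card L ≤ r) (m : ℕ) : (cutChars K f T m).ncard ≤ kappa n m r := by
  classical
  let φ : α ↪ Fin (Fintype.card α + n) :=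
    (Fintype.equivFin α).toEmbedding.trans (Fin.castAddEmb n)
  let j : L ↪ Fin r := (Finite.equivFin L).toEmbedding.trans (Fin.castLEEmb hL)
  let f' := Function.extend φ (fun a => j '' f a) fun _ => ∅
  -- `T`, padded with fresh isolated vertices
  let T' : Fin n → Fin (Fintype.card α + n) := fun i =>
    if h : (i : ℕ) < k then φ (T ⟨i, h⟩) else Fin.natAdd _ i
  have hφ (a : α) : (φ a : ℕ) < Fintype.card α := by simp [φ]
  have hT' : Function.Injective T' := by
    intro i i' h
    by_cases hi : (i : ℕ) < k <;> by_cases hi' : (i' : ℕ) < k <;>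
      simp only [T', hi, hi', dif_pos, dif_neg, not_false_eq_true] at h
    · exact Fin.ext (by simpa using congrArg Fin.val (hT (φ.injective h)))
    · have := hφ (T ⟨i, hi⟩); rw [h] at this; simp at this
    · have := hφ (T ⟨i', hi'⟩); rw [← h] at this; simp at this
    · exact Fin.natAdd_injective _ _ h
  have hchar (S : Set α) (t : α) :
      reachLabels (K.map φ) f' (φ '' S) (φ t) = j '' reachLabels K f S t := by
    rw [reachLabels_map, ← reachLabels_image]
    congr 1
    funext v
    exact φ.injective.extend_apply (fun a => j '' f a) (fun _ => ∅) v
  calc (cutChars K f T m).ncard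
      ≤ ((fun κ i => j ⁻¹' κ (Fin.castLE hkn i)) '' cutChars (K.map φ) f' T' m).ncard := by
        refine Set.ncard_le_ncard ?_ (Set.toFinite _)
        rintro _ ⟨S, hS, rfl⟩
        refine ⟨_, ⟨φ '' S, by rwa [Set.ncard_image_of_injective _ φ.injective], rfl⟩, ?_⟩
        funext i
        simp only [T', Fin.val_castLE, i.2, dif_pos, hchar, Set.preimage_image_eq _ j.injective]
    _ ≤ (cutChars (K.map φ) f' T' m).ncard := Set.ncard_image_le (Set.toFinite _)
    _ ≤ kappa n m r := le_csSup (bddAbove_cutChars_ncard n m r) ⟨_, K.map φ, f', T', hT', rfl⟩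

end CutCharacteristics

lemma ncard_biUnion_le_mul {ι α : Type*} {t : Set ι} (ht : t.Finite) (s : ι → Set α) {m : ℕ}
    (hs : ∀ i ∈ t, (s i).ncard ≤ m) : (⋃ i ∈ t, s i).ncard ≤ t.ncard * m := by
  have h := Finset.set_ncard_biUnion_le ht.toFinset s
  simp only [Set.Finite.mem_toFinset] at h
  calc _ ≤ _ := h
    _ ≤ ht.toFinset.card • m := Finset.sum_le_card_nsmul _ _ _ (by simpa using hs)
    _ = t.ncard * m := by rw [smul_eq_mul, Set.ncard_eq_toFinset_card t ht]

lemma exists_ncard_le_representatives {α γ : Type*} [Finite α] (𝒮 : Set (Set α))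
    (χ : Set α → γ) {m : ℕ} (hm : ∀ S ∈ 𝒮, S.ncard ≤ m) :
    ∃ W : Set α, W.ncard ≤ (χ '' 𝒮).ncard * m ∧
      ∀ S ∈ 𝒮, ∃ R ∈ 𝒮, R ⊆ W ∧ χ R = χ S ∧ R.ncard ≤ S.ncard := by
  have hrep : ∀ k ∈ χ '' 𝒮, ∃ R ∈ {R ∈ 𝒮 | χ R = k},
      ∀ R' ∈ {R ∈ 𝒮 | χ R = k}, R.ncard ≤ R'.ncard := by
    rintro k ⟨S, hS, rfl⟩
    exact Set.exists_min_image _ Set.ncard (Set.toFinite _) ⟨S, hS, rfl⟩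
  choose! rep hrep using hrep
  refine ⟨⋃ k ∈ χ '' 𝒮, rep k, ncard_biUnion_le_mul ((Set.toFinite 𝒮).image χ) rep
    fun k hk => hm _ (hrep k hk).1.1, fun S hS => ?_⟩
  obtain ⟨⟨hR, hRχ⟩, hmin⟩ := hrep (χ S) ⟨S, hS, rfl⟩
  exact ⟨rep (χ S), hR, Set.subset_biUnion_of_mem ⟨S, hS, rfl⟩, hRχ, hmin S ⟨hS, rfl⟩⟩

def portLabels (G : SimpleGraph V) (X C B : Set V) (v : V) : Set (X ⊕ B) :=
  {l | Sum.elim (fun x : X => v ∈ C ∧ G.Adj x v) (fun h : B => (h : V) = v) l}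

lemma mem_reachLabels_grestrict {L : Type} {G : SimpleGraph V} {A S : Set V} {f : V → Set L}
    {t : V} {l : L} : l ∈ reachLabels (grestrict G A) f S t ↔
      t ∉ S ∧ ∃ v, v ∉ S ∧ (grestrict G (A \ S)).Reachable t v ∧ l ∈ f v := by
  simp only [reachLabels, Set.mem_iUnion, mem_greach_singleton, gdelete_grestrict, exists_prop]
  tauto

lemma ReachPreserved.of_reachLabels_eq {G : SimpleGraph V} {X C B R S : Set V}
    (h : ∀ t ∈ B, reachLabels (grestrict G (C ∪ B)) (portLabels G X C B) R t =
      reachLabels (grestrict G (C ∪ B)) (portLabels G X C B) (S ∩ (C ∪ B)) t) :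
    ReachPreserved G X C B R S := by
  have key (t : V) (ht : t ∈ B) (l : X ⊕ B) (htR : t ∉ R)
      (hl : ∃ v, v ∉ R ∧ (grestrict G ((C ∪ B) \ R)).Reachable t v ∧ l ∈ portLabels G X C B v) :
      t ∉ S ∧ ∃ v, v ∉ S ∩ (C ∪ B) ∧ (grestrict G ((C ∪ B) \ S)).Reachable t v ∧
        l ∈ portLabels G X C B v := by
    have hl' := h t ht ▸ mem_reachLabels_grestrict.mpr ⟨htR, hl⟩
    rw [mem_reachLabels_grestrict, Set.sdiff_inter_self_eq_sdiff] at hl'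
    exact ⟨fun htS => hl'.1 ⟨htS, .inr ht⟩, hl'.2⟩
  refine ⟨fun t ht htR => (key t ht (.inr ⟨t, ht⟩) htR ⟨t, htR, .rfl, rfl⟩).1, ?_, ?_⟩
  · intro t ht htR x hx v hv hvR hxv hr
    obtain ⟨-, v', hv', hr', hv'C, hxv'⟩ := key t ht (.inl ⟨x, hx⟩) htR ⟨v, hvR, hr, hv, hxv⟩
    exact ⟨v', hv'C, fun h => hv' ⟨h, .inl hv'C⟩, hxv', hr'⟩
  · intro t ht htR t' ht' ht'R hr
    obtain ⟨-, v', -, hr', rfl⟩ := key t ht (.inr ⟨t', ht'⟩) htR ⟨t', ht'R, hr, rfl⟩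
    exact hr'

/-- `W` collects smallest representatives of the cut characteristics of `G[C ∪ B]` with terminals
`B` and labels `portLabels`. -/
theorem exists_reachPreserved_subset [Fintype V] (G : SimpleGraph V) (X C B : Set V) {δ : ℕ}
    (hB : B.ncard ≤ δ) :
    ∃ W : Set V, W.ncard ≤ kappa δ (δ - 1) (X.ncard + δ) * (δ - 1) ∧
      ∀ S : Set V, (S ∩ (C ∪ B)).ncard ≤ δ - 1 →
        ∃ R ⊆ W, R.ncard ≤ (S ∩ (C ∪ B)).ncard ∧ ReachPreserved G X C B R S := by
  let e : B ≃ Fin B.ncard := (Finite.equivFin B).trans (finCongr (Nat.card_coe_set_eq B))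
  let T : Fin B.ncard → V := fun i => e.symm i
  let χ : Set V → Fin B.ncard → Set (X ⊕ B) := fun S i =>
    reachLabels (grestrict G (C ∪ B)) (portLabels G X C B) S (T i)
  obtain ⟨W, hW, hrep⟩ := exists_ncard_le_representatives {S | S.ncard ≤ δ - 1} χ fun _ hS => hS
  have hκ : (χ '' {S | S.ncard ≤ δ - 1}).ncard ≤ kappa δ (δ - 1) (X.ncard + δ) :=
    calc _ ≤ (cutChars (grestrict G (C ∪ B)) (portLabels G X C B) T (δ - 1)).ncard :=
          Set.ncard_le_ncard (by rintro _ ⟨S, hS, rfl⟩; exact ⟨S, hS, rfl⟩) (Set.toFinite _)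
      _ ≤ _ := ncard_cutChars_le_kappa _ _ T (Subtype.val_injective.comp e.symm.injective) hB
          (by rw [Nat.card_sum, Nat.card_coe_set_eq, Nat.card_coe_set_eq]; omega) _
  refine ⟨W, hW.trans (Nat.mul_le_mul_right _ hκ), fun S hS => ?_⟩
  obtain ⟨R, -, hRW, hχ, hR⟩ := hrep (S ∩ (C ∪ B)) hS
  refine ⟨R, hRW, hR, .of_reachLabels_eq fun t ht => ?_⟩
  simpa [χ, T] using congrFun hχ (e ⟨t, ht⟩)

lemma exists_isCompOf_mem {G : SimpleGraph V} {A : Set V} {v : V} (hv : v ∈ A) :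
    ∃ C, IsCompOf G A C ∧ v ∈ C := by
  let C := {u | u ∈ A ∧ (grestrict G A).Reachable v u}
  have hreach : ∀ u ∈ C, (grestrict G C).Reachable v u := by
    rintro u ⟨-, hu⟩
    rw [reachable_iff_reflTransGen] at hu
    induction hu with
    | refl => rfl
    | tail hvw hwu ih =>
      obtain ⟨hG, hw, hu⟩ := grestrict_adj.mp hwu
      have hvw' := (reachable_iff_reflTransGen _ _).mpr hvw
      exact ih.trans (Adj.reachable (grestrict_adj.mpr
        ⟨hG, ⟨hw, hvw'⟩, ⟨hu, hvw'.trans hwu.reachable⟩⟩))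
  refine ⟨C, ⟨fun u hu => hu.1, ⟨v, hv, .rfl⟩, fun u hu u' hu' =>
    (hreach u hu).symm.trans (hreach u' hu'), fun u hu w hw huw =>
      ⟨hw, hu.2.trans (Adj.reachable (grestrict_adj.mpr ⟨huw, hu.1, hw⟩))⟩⟩, hv, .rfl⟩

lemma reachPreserved_self {G : SimpleGraph V} {X C B S : Set V} : ReachPreserved G X C B B S :=
  ⟨fun _ h h' => absurd h h', fun _ h h' => absurd h h', fun _ h h' => absurd h h'⟩

lemma exists_annColoring_diff_union [Finite V] {G : SimpleGraph V} {M : Set (Sym2 V)}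
    {X H C S : Set V} {δ : ℕ} {W : Set V} (hM : PairsOver M X) (hH : H ⊆ Xᶜ)
    (hHit : ∀ (p q : V) (W : G.Walk p q), IsImpXPath G X M W → (H ∩ walkInterior W).Nonempty)
    (b : (gdelete G X).Coloring Bool) (hC : IsCompOf G (Xᶜ ∩ Hᶜ) C)
    (hδ : (gnbhd G C ∩ H).ncard ≤ δ)
    (hW : ∀ S : Set V, (S ∩ (C ∪ gnbhd G C ∩ H)).ncard ≤ δ - 1 →
      ∃ R ⊆ W, R.ncard ≤ (S ∩ (C ∪ gnbhd G C ∩ H)).ncard ∧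
        ReachPreserved G X C (gnbhd G C ∩ H) R S)
    (hS : AnnColoring G M S) :
    ∃ R ⊆ W ∪ gnbhd G C ∩ H, (S \ (C ∪ gnbhd G C ∩ H) ∪ R).ncard ≤ S.ncard ∧
      AnnColoring G M (S \ (C ∪ gnbhd G C ∩ H) ∪ R) := by
  have hsplit := Set.ncard_inter_add_ncard_sdiff_eq_ncard S (C ∪ gnbhd G C ∩ H)
  by_cases hsmall : (S ∩ (C ∪ gnbhd G C ∩ H)).ncard ≤ δ - 1
  · obtain ⟨R, hRW, hR, hRS⟩ := hW S hsmall
    exact ⟨R, hRW.trans Set.subset_union_left, (Set.ncard_union_le _ _).trans (by omega),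
      hRS.annColoring hM hH hHit b hC hS⟩
  · exact ⟨_, Set.subset_union_right, (Set.ncard_union_le _ _).trans (by omega),
      reachPreserved_self.annColoring hM hH hHit b hC hS⟩

lemma exists_annColoring_sdiff_ssubset [Finite V] {G : SimpleGraph V} {M : Set (Sym2 V)}
    {X H Z S : Set V} {δ : ℕ} {W : Set V → Set V} (hM : PairsOver M X) (hH : H ⊆ Xᶜ)
    (hHit : ∀ (p q : V) (W : G.Walk p q), IsImpXPath G X M W → (H ∩ walkInterior W).Nonempty)
    (b : (gdelete G X).Coloring Bool)
    (hδ : ∀ C : Set V, IsCompOf G (Xᶜ ∩ Hᶜ) C → (gnbhd G C ∩ H).ncard ≤ δ)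
    (hW : ∀ C : Set V, IsCompOf G (Xᶜ ∩ Hᶜ) C → ∀ S : Set V,
      (S ∩ (C ∪ gnbhd G C ∩ H)).ncard ≤ δ - 1 → ∃ R ⊆ W C,
        R.ncard ≤ (S ∩ (C ∪ gnbhd G C ∩ H)).ncard ∧ ReachPreserved G X C (gnbhd G C ∩ H) R S)
    (hXHZ : X ∪ H ⊆ Z) (hWZ : ∀ C : Set V, IsCompOf G (Xᶜ ∩ Hᶜ) C → W C ⊆ Z)
    (hS : AnnColoring G M S) (hSZ : ¬ S ⊆ Z) :
    ∃ S', S'.ncard ≤ S.ncard ∧ AnnColoring G M S' ∧ S' \ Z ⊂ S \ Z := by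
  obtain ⟨z, hzS, hzZ⟩ := Set.not_subset.mp hSZ
  obtain ⟨C, hC, hzC⟩ := exists_isCompOf_mem (G := G)
    (show z ∈ Xᶜ ∩ Hᶜ from ⟨fun h => hzZ (hXHZ (.inl h)), fun h => hzZ (hXHZ (.inr h))⟩)
  obtain ⟨R, hRWB, hcard, hS'⟩ :=
    exists_annColoring_diff_union hM hH hHit b hC (hδ C hC) (hW C hC) hS
  have hRZ : R ⊆ Z := fun y hy =>
    (hRWB hy).elim (fun h => hWZ C hC h) fun h => hXHZ (.inr h.2)
  refine ⟨_, hcard, hS', (Set.ssubset_iff_of_subset ?_).mpr ⟨z, ⟨hzS, hzZ⟩, ?_⟩⟩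
  · rintro y ⟨hy | hy, hyZ⟩
    · exact ⟨hy.1, hyZ⟩
    · exact absurd (hRZ hy) hyZ
  · rintro ⟨hz | hz, -⟩
    · exact hz.2 (.inl hzC)
    · exact hzZ (hRZ hz)

lemma exists_subset_of_forall_ssubset [Finite V] {P : Set V → Prop} {Z S : Set V} (hS : P S)
    (h : ∀ S, P S → ¬ S ⊆ Z → ∃ S', P S' ∧ S' \ Z ⊂ S \ Z) : ∃ S' ⊆ Z, P S' := by
  obtain ⟨_, ⟨S₀, hS₀, rfl⟩, hmin⟩ :=
    wellFounded_lt.has_min {T | ∃ S, P S ∧ S \ Z = T} ⟨_, S, hS, rfl⟩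
  by_contra! hno
  obtain ⟨S', hS', hlt⟩ := h S₀ hS₀ fun hsub => hno S₀ hsub hS₀
  exact hmin _ ⟨S', hS', rfl⟩ hlt

/-- restricting the deletable vertices: for an annotated instance
`(G, X, M, ℓ)` and a set `H ⊆ V(G) \ X` meeting all important `X`-paths such that
`(G − X) − H` has at most `α` components each with at most `δ` neighbors in `H`, there
is a set `Z ⊇ X ∪ H` with `|Z| ≤ |X| + |H| + α·δ·κ(δ, δ−1, |X|+δ)` such that the
instance has a solution iff it has a solution contained in `Z`. -/
theorem stmt6 [Fintype V] (G : SimpleGraph V) (X : Set V) (M : Set (Sym2 V)) (ℓ : ℕ)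
    (hbip : (gdelete G X).Colorable 2) (hM : PairsOver M X)
    (H : Set V) (hH : H ⊆ Xᶜ) (α δ : ℕ)
    (hHit : ∀ (p q : V) (W : G.Walk p q), IsImpXPath G X M W →
      (H ∩ walkInterior W).Nonempty)
    (hα : {C : Set V | IsCompOf G (Xᶜ ∩ Hᶜ) C}.ncard ≤ α)
    (hδ : ∀ C : Set V, IsCompOf G (Xᶜ ∩ Hᶜ) C → (gnbhd G C ∩ H).ncard ≤ δ) :
    ∃ Z : Set V, X ∪ H ⊆ Z ∧
      Z.ncard ≤ X.ncard + H.ncard + α * δ * kappa δ (δ - 1) (X.ncard + δ) ∧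
      ((∃ S : Set V, S.ncard ≤ ℓ ∧ AnnColoring G M S) ↔
        (∃ S : Set V, S ⊆ Z ∧ S.ncard ≤ ℓ ∧ AnnColoring G M S)) := by
  let b : (gdelete G X).Coloring Bool := hbip.toColoring (by simp)
  set comps := {C : Set V | IsCompOf G (Xᶜ ∩ Hᶜ) C}
  choose! W hWcard hW using fun C (hC : C ∈ comps) =>
    exists_reachPreserved_subset G X C (gnbhd G C ∩ H) (hδ C hC)
  set Z := X ∪ H ∪ ⋃ C ∈ comps, W C
  refine ⟨Z, Set.subset_union_left, ?_,
    ⟨fun ⟨S, hSℓ, hS⟩ => ?_, fun ⟨S, _, hS⟩ => ⟨S, hS⟩⟩⟩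
  · calc _ ≤ X.ncard + H.ncard + comps.ncard * (kappa δ (δ - 1) (X.ncard + δ) * (δ - 1)) :=
          (Set.ncard_union_le _ _).trans (add_le_add (Set.ncard_union_le _ _)
            (ncard_biUnion_le_mul (Set.toFinite _) W hWcard))
      _ ≤ _ := by
        rw [mul_comm _ (δ - 1), ← mul_assoc]
        gcongr
        exact Nat.sub_le δ 1
  obtain ⟨S', hS'Z, hS'ℓ, hS'⟩ := exists_subset_of_forall_ssubset
    (P := fun S => S.ncard ≤ ℓ ∧ AnnColoring G M S) (Z := Z) ⟨hSℓ, hS⟩ fun S ⟨hSℓ, hS⟩ hSZ =>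
      (exists_annColoring_sdiff_ssubset hM hH hHit b hδ hW Set.subset_union_left
        (fun C hC => Set.subset_union_of_subset_right
          (Set.subset_biUnion_of_mem (u := W) (show C ∈ comps from hC)) _) hS hSZ).imp
        fun _ ⟨hcard, hS', hlt⟩ => ⟨⟨hcard.trans hSℓ, hS'⟩, hlt⟩
  exact ⟨S', hS'Z, hS'ℓ, hS'⟩
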